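/- arXiv:2504.21339 — 5 statements merged into one kernel-verified Lean document; each statement's English description precedes it below -/
import Mathlib

section
/- Let N ≥ 3 be a natural number. Then 1/(16(N-1)) + (1/(12(N-1)))^(N/(N-2)) · (N-2)/(4N) < 1/8 - (N-2)/(8N), where the power is the real power with exponent N/(N-2). -/
/-! Since `N / (N - 2) ≥ 1` and `1 / (12 (N - 1)) ≤ 1`, the power is at most its base, so it suffices
to prove the inequality with exponent `1`. Both sides are then rational in `N`: the left side is
`(2N - 1) / (24 N (N - 1))` and the right side is `1 / (4N)`, so the inequality reduces to `4N > 5`. -/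

lemma key_numerical_inequality_exponent_one {n : ℝ} (hn : 5 / 4 < n) :
    1 / (16 * (n - 1)) + 1 / (12 * (n - 1)) * ((n - 2) / (4 * n)) < 1 / 8 - (n - 2) / (8 * n) := by
  have hn1 : 0 < n - 1 := by linarith
  have hn0 : 0 < n := by linarith
  have lhs : 1 / (16 * (n - 1)) + 1 / (12 * (n - 1)) * ((n - 2) / (4 * n))
      = (2 * n - 1) / (24 * n * (n - 1)) := by field_simp; ring
  have rhs : 1 / 8 - (n - 2) / (8 * n) = 1 / (4 * n) := by field_simp; ring
  rw [lhs, rhs, div_lt_div_iff₀ (by positivity) (by positivity)]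
  nlinarith [mul_pos hn0 (show 0 < 4 * n - 5 by linarith)]

theorem key_numerical_inequality (N : ℕ) (hN : 3 ≤ N) :
    1 / (16 * ((N : ℝ) - 1)) +
      (1 / (12 * ((N : ℝ) - 1))) ^ ((N : ℝ) / ((N : ℝ) - 2)) * (((N : ℝ) - 2) / (4 * (N : ℝ)))
      < 1 / 8 - ((N : ℝ) - 2) / (8 * (N : ℝ)) := by
  have hN_real : (3 : ℝ) ≤ N := by exact_mod_cast hN
  have base_nonneg : 0 ≤ 1 / (12 * ((N : ℝ) - 1)) := div_nonneg zero_le_one (by linarith)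
  have base_le_one : 1 / (12 * ((N : ℝ) - 1)) ≤ 1 := by rw [div_le_one (by linarith)]; linarith
  have one_le_exponent : 1 ≤ (N : ℝ) / (N - 2) := by rw [one_le_div (by linarith)]; linarith
  have factor_nonneg : 0 ≤ ((N : ℝ) - 2) / (4 * N) := div_nonneg (by linarith) (by positivity)
  calc _ ≤ 1 / (16 * ((N : ℝ) - 1)) + 1 / (12 * ((N : ℝ) - 1)) * (((N : ℝ) - 2) / (4 * N)) := by
        gcongr
        exact Real.rpow_le_self_of_le_one base_nonneg base_le_one one_le_exponent
    _ < _ := key_numerical_inequality_exponent_one (by linarith)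
end

section
/- Let N ≥ 3 be a natural number, let p = 2N/(N-2), let A > 0 be a real number, and define Φ(t) = t²/4 - A·t^p and Ψ(t) = 3t²/4 + A·t^p for t ≥ 0. Set t₀ = (1/(2pA))^((N-2)/4) and t₁ = (12(N-1))^(-1/2) · t₀. Then Ψ(t₁) < (1/2)·Φ(t₀). -/
/-!
With `p = 2N/(N-2)` one has `p - 2 = 4/(N-2)`, so `t₀ = (1/(2pA))^(1/(p-2))` is the critical
point of `Φ`, where `A t₀^p = t₀²/(2p)`; hence `Φ(t₀) = t₀²/(2N)`. Since `p ≥ 2` and `t₁ = ε t₀`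
with `ε² = 1/(12(N-1)) ≤ 1`, we get `Ψ(t₁) ≤ ε² Ψ(t₀) = ε² t₀² (2N-1)/(2N)`, which is less than
`t₀²/(4N)` because `2(2N-1) < 12(N-1)`.
-/

open Real

lemma rpow_eq_mul_sq_of_rpow_sub_two_eq {t p c : ℝ} (ht : 0 < t) (h : t ^ (p - 2) = c) :
    t ^ p = c * t ^ 2 := by
  rw [← h, ← rpow_natCast, ← rpow_add ht]
  norm_num

lemma mul_rpow_critical_point {A p : ℝ} (hA : 0 < A) (hp : 2 < p) :
    A * ((1 / (2 * p * A)) ^ (p - 2)⁻¹) ^ p = ((1 / (2 * p * A)) ^ (p - 2)⁻¹) ^ 2 / (2 * p) := by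
  have hcrit : ((1 / (2 * p * A)) ^ (p - 2)⁻¹) ^ (p - 2) = 1 / (2 * p * A) :=
    rpow_inv_rpow (by positivity) (by linarith)
  rw [rpow_eq_mul_sq_of_rpow_sub_two_eq (by positivity) hcrit]
  field_simp

lemma mul_sq_add_rpow_mul_le {a A p ε t : ℝ} (hA : 0 ≤ A) (hp : 2 ≤ p) (hε₀ : 0 ≤ ε)
    (hε₁ : ε ≤ 1) (ht : 0 ≤ t) :
    a * (ε * t) ^ 2 + A * (ε * t) ^ p ≤ ε ^ 2 * (a * t ^ 2 + A * t ^ p) := by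
  have hεp : ε ^ p ≤ ε ^ 2 := by
    simpa using rpow_le_rpow_of_exponent_ge' hε₀ hε₁ zero_le_two hp
  rw [mul_rpow hε₀ ht]
  nlinarith [mul_le_mul_of_nonneg_right hεp (mul_nonneg hA (rpow_nonneg ht p))]

lemma rpow_neg_half_sq {x : ℝ} (hx : 0 < x) : (x ^ (-(1 / 2) : ℝ)) ^ 2 = 1 / x := by
  rw [← rpow_natCast, ← rpow_mul hx.le]
  norm_num [rpow_neg_one]

section SobolevExponent

variable {n p : ℝ} (hn : 2 < n) (hp : p = 2 * n / (n - 2))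
include hn hp

lemma two_lt_sobolevExponent : 2 < p := by
  rw [hp, lt_div_iff₀ (by linarith)]
  linarith

lemma div_four_eq_inv_sobolevExponent_sub_two : (n - 2) / 4 = (p - 2)⁻¹ := by
  rw [hp, div_sub' (by linarith), inv_div]
  ring

lemma one_div_two_mul_sobolevExponent : 1 / (2 * p) = (n - 2) / (4 * n) := by
  rw [hp]
  field_simp
  ring

lemma sobolevExponent_energy_lt :
    1 / (12 * (n - 1)) * (3 / 4 + 1 / (2 * p)) < 1 / 2 * (1 / 4 - 1 / (2 * p)) := by
  have hn1 : 0 < n - 1 := by linarith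
  rw [one_div_two_mul_sobolevExponent hn hp]
  field_simp
  nlinarith

end SobolevExponent

theorem mountain_pass_geometry (N : ℕ) (hN : 3 ≤ N) (p A : ℝ)
    (hp : p = 2 * (N : ℝ) / ((N : ℝ) - 2)) (hA : 0 < A)
    (Φ Ψ : ℝ → ℝ)
    (hΦ : ∀ t : ℝ, 0 ≤ t → Φ t = t ^ 2 / 4 - A * t ^ p)
    (hΨ : ∀ t : ℝ, 0 ≤ t → Ψ t = 3 * t ^ 2 / 4 + A * t ^ p)
    (t₀ t₁ : ℝ)
    (ht₀ : t₀ = (1 / (2 * p * A)) ^ (((N : ℝ) - 2) / 4))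
    (ht₁ : t₁ = (12 * ((N : ℝ) - 1)) ^ (-(1 / 2) : ℝ) * t₀) :
    Ψ t₁ < (1 / 2) * Φ t₀ := by
  have hN₂ : (2 : ℝ) < N := by exact_mod_cast hN
  have hp₂ : 2 < p := two_lt_sobolevExponent hN₂ hp
  rw [div_four_eq_inv_sobolevExponent_sub_two hN₂ hp] at ht₀
  have ht₀_pos : 0 < t₀ := by rw [ht₀]; positivity
  have hcrit : A * t₀ ^ p = t₀ ^ 2 / (2 * p) := by rw [ht₀]; exact mul_rpow_critical_point hA hp₂
  set ε := (12 * ((N : ℝ) - 1)) ^ (-(1 / 2) : ℝ)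
  have hε₀ : 0 ≤ ε := rpow_nonneg (by linarith) _
  have hε₁ : ε ≤ 1 := rpow_le_one_of_one_le_of_nonpos (by linarith) (by norm_num)
  calc Ψ t₁ = 3 / 4 * (ε * t₀) ^ 2 + A * (ε * t₀) ^ p := by
        rw [hΨ t₁ (by rw [ht₁]; exact mul_nonneg hε₀ ht₀_pos.le), ht₁]
        ring
    _ ≤ ε ^ 2 * (3 / 4 * t₀ ^ 2 + A * t₀ ^ p) :=
        mul_sq_add_rpow_mul_le hA.le hp₂.le hε₀ hε₁ ht₀_pos.le
    _ = t₀ ^ 2 * (1 / (12 * ((N : ℝ) - 1)) * (3 / 4 + 1 / (2 * p))) := by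
        rw [hcrit, rpow_neg_half_sq (by linarith)]
        ring
    _ < t₀ ^ 2 * (1 / 2 * (1 / 4 - 1 / (2 * p))) :=
        mul_lt_mul_of_pos_left (sobolevExponent_energy_lt hN₂ hp) (by positivity)
    _ = 1 / 2 * Φ t₀ := by
        rw [hΦ t₀ ht₀_pos.le, hcrit]
        ring
end

section
/- Let f : ℝ → ℝ be continuous, let μ > 2, and define F(u) = ∫₀ᵘ f(t) dt. Assume that u·f(u) ≥ μ·F(u) ≥ 0 for all u ∈ ℝ. Then for every u ∈ ℝ and every t ≥ 1, F(t·u) ≥ t^μ · F(u). -/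
/-!
Applied at `s u`, the inequality `u f(u) ≥ μ F(u)` says that `s ↦ F(s u) s^{-μ}` has
nonnegative derivative on `(0, ∞)`, so it is nondecreasing there; comparing its values at `1` and `t`
gives `F(t u) ≥ t^μ F(u)`.
-/

open Set

section RpowRatio

variable {G G' : ℝ → ℝ} {μ : ℝ}

theorem hasDerivAt_mul_rpow_neg {s : ℝ} (hs : 0 < s) (hG : HasDerivAt G (G' s) s) :
    HasDerivAt (fun x => G x * x ^ (-μ)) (s ^ (-μ - 1) * (s * G' s - μ * G s)) s := by
  refine (hG.mul (Real.hasDerivAt_rpow_const (p := -μ) (Or.inl hs.ne'))).congr_deriv ?_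
  have hpow : s ^ (-μ - 1) * s = s ^ (-μ) := by
    rw [← Real.rpow_add_one hs.ne']
    ring_nf
  linear_combination -G' s * hpow

theorem monotoneOn_mul_rpow_neg_of_le_mul_deriv (hG : ∀ s > 0, HasDerivAt G (G' s) s)
    (hμG : ∀ s > 0, μ * G s ≤ s * G' s) :
    MonotoneOn (fun s => G s * s ^ (-μ)) (Ioi 0) := by
  refine monotoneOn_of_hasDerivWithinAt_nonneg
    (f' := fun s => s ^ (-μ - 1) * (s * G' s - μ * G s)) (convex_Ioi 0)
    (fun s hs => (hasDerivAt_mul_rpow_neg hs (hG s hs)).continuousAt.continuousWithinAt)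
    (fun s hs => ?_) (fun s hs => ?_) <;> rw [interior_Ioi] at hs
  · exact (hasDerivAt_mul_rpow_neg hs (hG s hs)).hasDerivWithinAt
  · exact mul_nonneg (Real.rpow_nonneg hs.le _) (sub_nonneg.mpr (hμG s hs))

theorem rpow_mul_le_of_le_mul_deriv (hG : ∀ s > 0, HasDerivAt G (G' s) s)
    (hμG : ∀ s > 0, μ * G s ≤ s * G' s) {t : ℝ} (ht : 1 ≤ t) :
    t ^ μ * G 1 ≤ G t := by
  have ht₀ : 0 < t := one_pos.trans_le ht
  have hmono : G 1 * 1 ^ (-μ) ≤ G t * t ^ (-μ) :=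
    monotoneOn_mul_rpow_neg_of_le_mul_deriv hG hμG (mem_Ioi.mpr one_pos) (mem_Ioi.mpr ht₀) ht
  rw [Real.one_rpow, mul_one, Real.rpow_neg ht₀.le] at hmono
  have htμ : 0 < t ^ μ := Real.rpow_pos_of_pos ht₀ μ
  calc t ^ μ * G 1 ≤ t ^ μ * (G t * (t ^ μ)⁻¹) := by gcongr
    _ = G t := by field_simp

end RpowRatio

theorem AR_condition_superlinear_growth_general (f : ℝ → ℝ) (hf : Continuous f) (μ : ℝ)
    (F : ℝ → ℝ) (hF : ∀ u : ℝ, F u = ∫ t in (0 : ℝ)..u, f t)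
    (hAR : ∀ u : ℝ, u * f u ≥ μ * F u ∧ μ * F u ≥ 0) :
    ∀ u : ℝ, ∀ t : ℝ, 1 ≤ t → F (t * u) ≥ t ^ μ * F u := by
  intro u t ht
  have hFeq : F = fun u => ∫ t in (0 : ℝ)..u, f t := funext hF
  have hFderiv (s : ℝ) : HasDerivAt (fun x => F (x * u)) (f (s * u) * u) s := by
    rw [hFeq]
    have hlin : HasDerivAt (fun x : ℝ => x * u) u s := by
      simpa using (hasDerivAt_id s).mul_const u
    exact (hf.integral_hasStrictDerivAt 0 (s * u)).hasDerivAt.comp s hlin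
  have hμF (s : ℝ) : μ * F (s * u) ≤ s * (f (s * u) * u) := by
    linarith [(hAR (s * u)).1]
  simpa using rpow_mul_le_of_le_mul_deriv (fun s _ => hFderiv s) (fun s _ => hμF s) ht

theorem AR_condition_superlinear_growth (f : ℝ → ℝ) (hf : Continuous f) (μ : ℝ) (hμ : 2 < μ)
    (F : ℝ → ℝ) (hF : ∀ u : ℝ, F u = ∫ t in (0 : ℝ)..u, f t)
    (hAR : ∀ u : ℝ, u * f u ≥ μ * F u ∧ μ * F u ≥ 0) :
    ∀ u : ℝ, ∀ t : ℝ, 1 ≤ t → F (t * u) ≥ t ^ μ * F u :=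
  AR_condition_superlinear_growth_general f hf μ F hF hAR
end

section
/- Let μ > 2 and c ∈ ℝ, and let (tₙ), (Fₙ), (Gₙ), (fₙ), (gₙ) be real sequences with tₙ ≥ 0, Fₙ ≥ 0, Gₙ ≤ 0, fₙ ≥ μ·Fₙ, and gₙ ≥ Gₙ for all n. Assume that (1/2)tₙ² - Fₙ - (1/2)Gₙ → c as n → ∞, and that (tₙ² - fₙ - gₙ)/(1 + tₙ) → 0 as n → ∞. Then the sequence (tₙ) is bounded. -/
/-!
Write `Jₙ = ½tₙ² - Fₙ - ½Gₙ` and `Pₙ = tₙ² - fₙ - gₙ`. The Ambrosetti–Rabinowitz condition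
`fₙ ≥ μFₙ` together with `gₙ ≥ Gₙ` and `Gₙ ≤ 0` gives `(μ/2 - 1) tₙ² ≤ μJₙ - Pₙ`. Both convergent
sequences are bounded, `Jₙ ≤ B` and `Pₙ/(1 + tₙ) ≥ C`, so `(μ/2 - 1) tₙ² ≤ μB - C(1 + tₙ)`, and a
quadratic dominated by an affine function is bounded.
-/

open Filter

lemma le_of_mul_sq_le_add_mul {k a b x : ℝ} (hk : 0 < k) (h : k * x ^ 2 ≤ a + b * x) :
    x ≤ 1 + (|a| + |b|) / k := by
  by_contra! hx
  have hx1 : 1 < x := lt_of_le_of_lt (le_add_of_nonneg_right (by positivity)) hx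
  have hkx : |a| + |b| < (x - 1) * k := (div_lt_iff₀ hk).1 (lt_sub_iff_add_lt'.2 hx)
  nlinarith [mul_lt_mul_of_pos_right hkx (by linarith : 0 < x), le_abs_self a,
    mul_le_mul_of_nonneg_right (le_abs_self b) (by linarith : 0 ≤ x), abs_nonneg a]

lemma sub_one_mul_sq_le_energy {μ t F G f g : ℝ} (hμ : 2 ≤ μ) (hG : G ≤ 0) (hf : μ * F ≤ f)
    (hg : G ≤ g) :
    (μ / 2 - 1) * t ^ 2 ≤ μ * (1 / 2 * t ^ 2 - F - 1 / 2 * G) - (t ^ 2 - f - g) := by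
  nlinarith [mul_nonneg (by linarith : (0 : ℝ) ≤ μ / 2 - 1) (neg_nonneg.2 hG)]

theorem PS_sequence_bounded_general (μ c : ℝ) (hμ : 2 < μ)
    (t F G f g : ℕ → ℝ)
    (ht : ∀ n, 0 ≤ t n) (hG : ∀ n, G n ≤ 0)
    (hf : ∀ n, f n ≥ μ * F n) (hg : ∀ n, g n ≥ G n)
    (hJ : Tendsto (fun n => (1 / 2) * (t n) ^ 2 - F n - (1 / 2) * G n) atTop (nhds c))
    (hJ' : Tendsto (fun n => ((t n) ^ 2 - f n - g n) / (1 + t n)) atTop (nhds 0)) :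
    ∃ M : ℝ, ∀ n, t n ≤ M := by
  obtain ⟨B, hB⟩ := hJ.bddAbove_range
  obtain ⟨C, hC⟩ := hJ'.bddBelow_range
  refine ⟨1 + (|μ * B - C| + |-C|) / (μ / 2 - 1), fun n => ?_⟩
  have hJB : 1 / 2 * t n ^ 2 - F n - 1 / 2 * G n ≤ B := hB ⟨n, rfl⟩
  have hCP : C * (1 + t n) ≤ t n ^ 2 - f n - g n :=
    (le_div_iff₀ (by linarith [ht n])).1 (hC ⟨n, rfl⟩)
  refine le_of_mul_sq_le_add_mul (by linarith) ?_
  calc (μ / 2 - 1) * t n ^ 2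
      ≤ μ * (1 / 2 * t n ^ 2 - F n - 1 / 2 * G n) - (t n ^ 2 - f n - g n) :=
        sub_one_mul_sq_le_energy hμ.le (hG n) (hf n) (hg n)
    _ ≤ μ * B - C * (1 + t n) := by gcongr
    _ = μ * B - C + -C * t n := by ring

theorem PS_sequence_bounded (μ c : ℝ) (hμ : 2 < μ)
    (t F G f g : ℕ → ℝ)
    (ht : ∀ n, 0 ≤ t n) (hF : ∀ n, 0 ≤ F n) (hG : ∀ n, G n ≤ 0)
    (hf : ∀ n, f n ≥ μ * F n) (hg : ∀ n, g n ≥ G n)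
    (hJ : Tendsto (fun n => (1 / 2) * (t n) ^ 2 - F n - (1 / 2) * G n) atTop (nhds c))
    (hJ' : Tendsto (fun n => ((t n) ^ 2 - f n - g n) / (1 + t n)) atTop (nhds 0)) :
    ∃ M : ℝ, ∀ n, t n ≤ M :=
  PS_sequence_bounded_general μ c hμ t F G f g ht hG hf hg hJ hJ'
end

section
/- Let (Ω, μ) be a finite measure space and ε > 0. Let g : Ω × (0,∞) → ℝ be jointly measurable, nonnegative, continuous in the second variable, and antitone (nonincreasing) in the second variable, with x ↦ g(x, ε) essentially bounded on Ω. Let G : Ω × (0,∞) → ℝ be such that for each x ∈ Ω the map s ↦ G(x,s) is differentiable on (0,∞) with derivative g(x,s), and such that x ↦ G(x, ε) is integrable. Let u, v ∈ L²(μ). Then the function t ↦ ∫_Ω G(x, ε + (u(x) + t·v(x))²) dμ is well defined for all t ∈ ℝ and is differentiable at t = 0 with derivative 2·∫_Ω g(x, ε + u(x)²)·u(x)·v(x) dμ. -/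
/-!
For `s ≥ ε` the fundamental theorem of calculus gives `G x s = G x ε + ∫ τ in ε..s, g x τ`
(an antitone `g x` is interval integrable), and monotonicity bounds the integral by
`g x ε * (s - ε)`. Through the joint measurability of `g`, the integral representation makes
`x ↦ G x (w x)` measurable, and the bound makes it integrable for `w = ε + (u + t v)²`.
Since `g x` is antitone, `g x ε` also dominates `g x (ε + (u + t v)²)`, so for `|t| < 1` the
`t`-derivative of the integrand is dominated by `B (u² + 3 v²)`, and one may differentiate
under the integral sign.
-/

open MeasureTheory Filter Set Function

theorem AntitoneOn.intervalIntegral_eq_sub_of_hasDerivAt {G g : ℝ → ℝ} {a b : ℝ}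
    (hg : AntitoneOn g (uIcc a b)) (hG : ∀ t ∈ uIcc a b, HasDerivAt G (g t) t) :
    ∫ t in a..b, g t = G b - G a :=
  intervalIntegral.integral_eq_sub_of_hasDerivAt hG hg.intervalIntegrable

theorem AntitoneOn.abs_sub_le_of_hasDerivAt {G g : ℝ → ℝ} {a b : ℝ} (hab : a ≤ b)
    (hg : AntitoneOn g (Icc a b)) (hgb : 0 ≤ g b) (hG : ∀ t ∈ Icc a b, HasDerivAt G (g t) t) :
    |G b - G a| ≤ g a * (b - a) := by
  have hFTC : ∫ t in a..b, g t = G b - G a := by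
    rw [← uIcc_of_le hab] at hg hG
    exact hg.intervalIntegral_eq_sub_of_hasDerivAt hG
  rw [← hFTC, ← abs_of_nonneg (sub_nonneg.2 hab : 0 ≤ b - a)]
  refine intervalIntegral.norm_integral_le_of_norm_le_const (f := g) fun t ht => ?_
  rw [uIoc_of_le hab] at ht
  have ht' : t ∈ Icc a b := Ioc_subset_Icc_self ht
  rw [Real.norm_eq_abs, abs_of_nonneg (hgb.trans (hg ht' (right_mem_Icc.2 hab) ht'.2))]
  exact hg (left_mem_Icc.2 hab) ht' ht'.1

theorem measurable_setIntegral_Ioc_of_measurable_uncurry {Ω : Type*} [MeasurableSpace Ω]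
    {f : Ω → ℝ → ℝ} (hf : Measurable (uncurry f)) {a b : Ω → ℝ} (ha : Measurable a)
    (hb : Measurable b) : Measurable fun x => ∫ t in Ioc (a x) (b x), f x t := by
  have hS : MeasurableSet {p : Ω × ℝ | p.2 ∈ Ioc (a p.1) (b p.1)} :=
    (measurableSet_lt (ha.comp measurable_fst) measurable_snd).inter
      (measurableSet_le measurable_snd (hb.comp measurable_fst))
  convert ((hf.indicator hS).stronglyMeasurable.integral_prod_right' (ν := volume)).measurable
    using 2 with x
  exact (integral_indicator measurableSet_Ioc).symm

theorem measurable_intervalIntegral_of_measurable_uncurry {Ω : Type*} [MeasurableSpace Ω]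
    {f : Ω → ℝ → ℝ} (hf : Measurable (uncurry f)) {a b : Ω → ℝ} (ha : Measurable a)
    (hb : Measurable b) : Measurable fun x => ∫ t in a x..b x, f x t :=
  (measurable_setIntegral_Ioc_of_measurable_uncurry hf ha hb).sub
    (measurable_setIntegral_Ioc_of_measurable_uncurry hf hb ha)

theorem HasDerivAt.comp_add_add_mul_sq {G : ℝ → ℝ} {G' ε a b t : ℝ}
    (hG : HasDerivAt G G' (ε + (a + t * b) ^ 2)) :
    HasDerivAt (fun t => G (ε + (a + t * b) ^ 2)) (G' * (2 * (a + t * b) * b)) t := by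
  have hline : HasDerivAt (fun t => a + t * b) b t := by
    simpa using ((hasDerivAt_id t).mul_const b).const_add a
  have hinner : HasDerivAt (fun t => ε + (a + t * b) ^ 2) (2 * (a + t * b) * b) t := by
    simpa using (hline.pow 2).const_add ε
  exact hG.comp t hinner

theorem abs_two_mul_add_mul_mul_le {a b t : ℝ} (ht : |t| ≤ 1) :
    |2 * (a + t * b) * b| ≤ a ^ 2 + 3 * b ^ 2 := by
  obtain ⟨ht₁, ht₂⟩ := abs_le.1 ht
  refine abs_le.2 ⟨?_, ?_⟩ <;>
    nlinarith [sq_nonneg (a - b), sq_nonneg (a + b), mul_nonneg (sq_nonneg b) (sub_nonneg.2 ht₂),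
      mul_nonneg (sq_nonneg b) (neg_le_iff_add_nonneg.1 ht₁)]

section

variable {Ω : Type*} [MeasurableSpace Ω] {μ : Measure Ω} {ε : ℝ} {g G : Ω → ℝ → ℝ}

theorem aestronglyMeasurable_comp_of_hasDerivAt (hε : 0 < ε) (hgmeas : Measurable (uncurry g))
    (hganti : ∀ x, AntitoneOn (g x) (Ioi 0)) (hG : ∀ x s, 0 < s → HasDerivAt (G x) (g x s) s)
    (hGε : AEStronglyMeasurable (fun x => G x ε) μ) {w : Ω → ℝ} (hw : AEMeasurable w μ)
    (hwε : ∀ᵐ x ∂μ, ε ≤ w x) : AEStronglyMeasurable (fun x => G x (w x)) μ := by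
  set w' : Ω → ℝ := fun x => max ε (hw.mk w x)
  have hFTC : ∀ x, G x (w' x) = G x ε + ∫ t in ε..w' x, g x t := fun x => by
    have hpos : uIcc ε (w' x) ⊆ Ioi 0 := by
      rw [uIcc_of_le (le_max_left _ _)]
      exact fun t ht => hε.trans_le ht.1
    rw [((hganti x).mono hpos).intervalIntegral_eq_sub_of_hasDerivAt
      fun t ht => hG x t (hpos ht)]
    ring
  have hmeas : Measurable fun x => ∫ t in ε..w' x, g x t :=
    measurable_intervalIntegral_of_measurable_uncurry (a := fun _ => ε) hgmeas measurable_const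
      (measurable_const.max hw.measurable_mk)
  refine (hGε.add hmeas.aestronglyMeasurable).congr ?_
  filter_upwards [hw.ae_eq_mk, hwε] with x hx hxε
  rw [Pi.add_apply, ← hFTC, show w' x = w x by simp [w', ← hx, hxε]]

theorem integrable_comp_of_hasDerivAt (hε : 0 < ε) (hgmeas : Measurable (uncurry g))
    (hgnonneg : ∀ x s, 0 < s → 0 ≤ g x s) (hganti : ∀ x, AntitoneOn (g x) (Ioi 0))
    (hG : ∀ x s, 0 < s → HasDerivAt (G x) (g x s) s) (hGint : Integrable (fun x => G x ε) μ)
    {B : ℝ} (hB : ∀ᵐ x ∂μ, g x ε ≤ B) {w : Ω → ℝ} (hw : AEMeasurable w μ)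
    (hwε : ∀ᵐ x ∂μ, ε ≤ w x) (hwint : Integrable (fun x => w x - ε) μ) :
    Integrable (fun x => G x (w x)) μ := by
  refine (hGint.abs.add (hwint.const_mul B)).mono'
    (aestronglyMeasurable_comp_of_hasDerivAt hε hgmeas hganti hG hGint.1 hw hwε) ?_
  filter_upwards [hB, hwε] with x hxB hxε
  have hpos : Icc ε (w x) ⊆ Ioi 0 := fun t ht => hε.trans_le ht.1
  calc ‖G x (w x)‖ ≤ |G x ε| + |G x (w x) - G x ε| := by
        rw [Real.norm_eq_abs]; linarith [abs_sub_abs_le_abs_sub (G x (w x)) (G x ε)]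
    _ ≤ |G x ε| + g x ε * (w x - ε) := by
        gcongr
        exact ((hganti x).mono hpos).abs_sub_le_of_hasDerivAt hxε
          (hgnonneg x _ (hε.trans_le hxε)) fun t ht => hG x t (hpos ht)
    _ ≤ |G x ε| + B * (w x - ε) := by gcongr

theorem hasDerivAt_integral_comp_add_add_mul_sq (hε : 0 < ε) (hgmeas : Measurable (uncurry g))
    (hgnonneg : ∀ x s, 0 < s → 0 ≤ g x s) (hganti : ∀ x, AntitoneOn (g x) (Ioi 0))
    (hG : ∀ x s, 0 < s → HasDerivAt (G x) (g x s) s) {B : ℝ} (hB : ∀ᵐ x ∂μ, g x ε ≤ B)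
    {u v : Ω → ℝ} (hu : MemLp u 2 μ) (hv : MemLp v 2 μ)
    (hint : ∀ t : ℝ, Integrable (fun x => G x (ε + (u x + t * v x) ^ 2)) μ) :
    HasDerivAt (fun t : ℝ => ∫ x, G x (ε + (u x + t * v x) ^ 2) ∂μ)
      (2 * ∫ x, g x (ε + u x ^ 2) * u x * v x ∂μ) 0 := by
  have hle : ∀ a : ℝ, ε ≤ ε + a ^ 2 := fun a => le_add_of_nonneg_right (sq_nonneg a)
  have hbound : ∀ᵐ x ∂μ, ∀ t ∈ Metric.ball (0 : ℝ) 1,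
      ‖g x (ε + (u x + t * v x) ^ 2) * (2 * (u x + t * v x) * v x)‖
        ≤ B * (u x ^ 2 + 3 * v x ^ 2) := by
    filter_upwards [hB] with x hxB t ht
    have hs := hle (u x + t * v x)
    rw [Real.norm_eq_abs, abs_mul, abs_of_nonneg (hgnonneg x _ (hε.trans_le hs))]
    calc _ ≤ g x (ε + (u x + t * v x) ^ 2) * (u x ^ 2 + 3 * v x ^ 2) := by
          gcongr
          · exact hgnonneg x _ (hε.trans_le hs)
          · exact abs_two_mul_add_mul_mul_le (mem_ball_zero_iff.1 ht).le
      _ ≤ g x ε * (u x ^ 2 + 3 * v x ^ 2) := by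
          gcongr
          exact hganti x hε (hε.trans_le hs) hs
      _ ≤ B * (u x ^ 2 + 3 * v x ^ 2) := by gcongr
  have hu' := hu.1.aemeasurable
  have hv' := hv.1.aemeasurable
  have hF'meas : AEStronglyMeasurable
      (fun x => g x (ε + (u x + 0 * v x) ^ 2) * (2 * (u x + 0 * v x) * v x)) μ :=
    ((hgmeas.comp_aemeasurable (aemeasurable_id.prodMk (by fun_prop))).mul
      (by fun_prop)).aestronglyMeasurable
  have hderiv := hasDerivAt_integral_of_dominated_loc_of_deriv_le
    (Metric.ball_mem_nhds 0 one_pos) (Eventually.of_forall fun t => (hint t).1) (hint 0) hF'meas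
    hbound ((hu.integrable_sq.add (hv.integrable_sq.const_mul 3)).const_mul B)
    (ae_of_all _ fun x t _ => (hG x _ (hε.trans_le (hle _))).comp_add_add_mul_sq)
  refine hderiv.2.congr_deriv ?_
  rw [← integral_const_mul]
  congr 1 with x
  simp only [zero_mul, add_zero]
  ring

end

theorem singular_energy_differentiable_general
    {Ω : Type*} [MeasurableSpace Ω] (μ : Measure Ω)
    (ε : ℝ) (hε : 0 < ε)
    (g : Ω → ℝ → ℝ) (hgmeas : Measurable (Function.uncurry g))
    (hgnonneg : ∀ x : Ω, ∀ s : ℝ, 0 < s → 0 ≤ g x s)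
    (hganti : ∀ x : Ω, AntitoneOn (g x) (Set.Ioi 0))
    (hgbdd : ∃ B : ℝ, ∀ᵐ x ∂μ, |g x ε| ≤ B)
    (G : Ω → ℝ → ℝ)
    (hG : ∀ x : Ω, ∀ s : ℝ, 0 < s → HasDerivAt (G x) (g x s) s)
    (hGint : Integrable (fun x => G x ε) μ)
    (u v : Ω → ℝ) (hu : MemLp u 2 μ) (hv : MemLp v 2 μ) :
    (∀ t : ℝ, Integrable (fun x => G x (ε + (u x + t * v x) ^ 2)) μ) ∧
      HasDerivAt (fun t : ℝ => ∫ x, G x (ε + (u x + t * v x) ^ 2) ∂μ)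
        (2 * ∫ x, g x (ε + (u x) ^ 2) * u x * v x ∂μ) 0 := by
  obtain ⟨B, hB⟩ := hgbdd
  have hgB : ∀ᵐ x ∂μ, g x ε ≤ B := hB.mono fun x hx => (le_abs_self _).trans hx
  have hint : ∀ t : ℝ, Integrable (fun x => G x (ε + (u x + t * v x) ^ 2)) μ := fun t =>
    integrable_comp_of_hasDerivAt hε hgmeas hgnonneg hganti hG hGint hgB
      (by have := hu.1.aemeasurable; have := hv.1.aemeasurable; fun_prop)
      (ae_of_all _ fun x => le_add_of_nonneg_right (sq_nonneg _))
      (by simpa using (hu.add (hv.const_mul t)).integrable_sq)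
  exact ⟨hint,
    hasDerivAt_integral_comp_add_add_mul_sq hε hgmeas hgnonneg hganti hG hgB hu hv hint⟩

theorem singular_energy_differentiable
    {Ω : Type*} [MeasurableSpace Ω] (μ : Measure Ω) [IsFiniteMeasure μ]
    (ε : ℝ) (hε : 0 < ε)
    (g : Ω → ℝ → ℝ) (hgmeas : Measurable (Function.uncurry g))
    (hgnonneg : ∀ x : Ω, ∀ s : ℝ, 0 < s → 0 ≤ g x s)
    (hgcont : ∀ x : Ω, ContinuousOn (g x) (Set.Ioi 0))
    (hganti : ∀ x : Ω, AntitoneOn (g x) (Set.Ioi 0))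
    (hgbdd : ∃ B : ℝ, ∀ᵐ x ∂μ, |g x ε| ≤ B)
    (G : Ω → ℝ → ℝ)
    (hG : ∀ x : Ω, ∀ s : ℝ, 0 < s → HasDerivAt (G x) (g x s) s)
    (hGint : Integrable (fun x => G x ε) μ)
    (u v : Ω → ℝ) (hu : MemLp u 2 μ) (hv : MemLp v 2 μ) :
    (∀ t : ℝ, Integrable (fun x => G x (ε + (u x + t * v x) ^ 2)) μ) ∧
      HasDerivAt (fun t : ℝ => ∫ x, G x (ε + (u x + t * v x) ^ 2) ∂μ)
        (2 * ∫ x, g x (ε + (u x) ^ 2) * u x * v x ∂μ) 0 :=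
  singular_energy_differentiable_general μ ε hε g hgmeas hgnonneg hganti hgbdd G hG hGint u v hu hv
end
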